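/- Let X be a prestreak and Y a streak. (1) There exists at most one map f : X → Y which preserves comparison with rationals on both sides, i.e., such that for all q ∈ ℚ and a ∈ X: q < a implies q < f(a), and a < q implies f(a) < q. (2) If moreover X is archimedean and f : X → Y preserves comparison with rationals on both sides, then f is a prestreak morphism (it preserves <, +, 0, 1, and products of positive elements). -/

import Mathlib

/-- A prestreak: a strict order (asymmetric and cotransitive) together with a
commutative additive monoid structure and a commutative multiplicative monoid
structure on the positive part, compatible with the order.  (The intrinsic
topology conditions of the paper are omitted, being vacuous in the classical
set-theoretic setting.) -/
structure Prestreak (X : Type*) where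
  lt : X → X → Prop
  add : X → X → X
  zero : X
  mul : X → X → X
  one : X
  lt_asymm : ∀ a b, ¬ (lt a b ∧ lt b a)
  lt_cotrans : ∀ a b x, lt a b → lt a x ∨ lt x b
  add_comm : ∀ a b, add a b = add b a
  add_assoc : ∀ a b c, add (add a b) c = add a (add b c)
  add_zero : ∀ a, add a zero = a
  zero_lt_one : lt zero one
  mul_pos : ∀ a b, lt zero a → lt zero b → lt zero (mul a b)
  mul_comm : ∀ a b, lt zero a → lt zero b → mul a b = mul b a
  mul_assoc : ∀ a b c, lt zero a → lt zero b → lt zero c →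
    mul (mul a b) c = mul a (mul b c)
  mul_one : ∀ a, lt zero a → mul a one = a
  mul_add : ∀ a b c, lt zero a → lt zero b → lt zero c →
    mul (add a b) c = add (mul a c) (mul b c)
  add_lt_add_iff : ∀ a b x, (lt (add a x) (add b x) ↔ lt a b)
  mul_lt_mul_iff : ∀ a b x, lt zero a → lt zero b → lt zero x →
    (lt (mul a x) (mul b x) ↔ lt a b)

namespace Prestreak

variable {X : Type*}

/-- Multiplication by a natural number: `0·a = 0`, `(n+1)·a = n·a + a`. -/
def nsmul (P : Prestreak X) : ℕ → X → X
  | 0, _ => P.zero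
  | n + 1, a => P.add (nsmul P n a) a

/-- The canonical image of a natural number, `n ↦ n·1`. -/
def ofNat (P : Prestreak X) (n : ℕ) : X := P.nsmul n P.one

/-- Comparison `x < q` of an element of a prestreak with a rational number,
using the canonical representation `q = (q.num⁺ − q.num⁻)/q.den`:
`x < (a−b)/c  :=  c·x + b < a`. -/
def ltQ (P : Prestreak X) (x : X) (q : ℚ) : Prop :=
  P.lt (P.add (P.nsmul q.den x) (P.ofNat ((-q.num).toNat))) (P.ofNat q.num.toNat)

/-- Comparison `q < x` of a rational with an element of a prestreak:
`(a−b)/c < x  :=  a < c·x + b`. -/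
def qLt (P : Prestreak X) (q : ℚ) (x : X) : Prop :=
  P.lt (P.ofNat q.num.toNat) (P.add (P.nsmul q.den x) (P.ofNat ((-q.num).toNat)))

/-- The archimedean property for prestreaks. -/
def Archimedean (P : Prestreak X) : Prop :=
  ∀ a b c d : X, P.lt b d →
    ∃ n : ℕ, P.lt (P.add a (P.nsmul n b)) (P.add c (P.nsmul n d))

/-- Tightness: antisymmetry of `≤` (where `a ≤ b := ¬ b < a`).
A streak is a tight archimedean prestreak. -/
def Tight (P : Prestreak X) : Prop :=
  ∀ a b : X, ¬ P.lt a b → ¬ P.lt b a → a = b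

/-- The apartness relation `a # b := a < b ∨ b < a`. -/
def Apart (P : Prestreak X) (a b : X) : Prop := P.lt a b ∨ P.lt b a

/-- A morphism of prestreaks: preserves `<`, `+`, `0`, `1` and products of
positive elements. -/
def IsHom {Y : Type*} (P : Prestreak X) (Q : Prestreak Y) (f : X → Y) : Prop :=
  (∀ a b, P.lt a b → Q.lt (f a) (f b)) ∧
  (∀ a b, f (P.add a b) = Q.add (f a) (f b)) ∧
  f P.zero = Q.zero ∧ f P.one = Q.one ∧
  (∀ a b, P.lt P.zero a → P.lt P.zero b → f (P.mul a b) = Q.mul (f a) (f b))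

/-- A multiplicative structure on a prestreak: a total multiplication which is
commutative, associative, distributes over addition, has unit `1`, restricts to
the given multiplication on positive elements, and satisfies the multiplicity
condition. -/
def IsMultiplicative (P : Prestreak X) (tmul : X → X → X) : Prop :=
  (∀ a b, tmul a b = tmul b a) ∧
  (∀ a b c, tmul (tmul a b) c = tmul a (tmul b c)) ∧
  (∀ a b c, tmul (P.add a b) c = P.add (tmul a c) (tmul b c)) ∧
  (∀ a, tmul a P.one = a) ∧
  (∀ a b, P.lt P.zero a → P.lt P.zero b → tmul a b = P.mul a b) ∧
  (∀ a b c d, P.lt b a → P.lt d c →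
    P.lt (P.add (tmul a d) (tmul b c)) (P.add (tmul a c) (tmul b d)))

end Prestreak

/-!
Write a rational as `(A - B) / c` with `A B c : ℕ`, so that `q < x` reads `A < c·x + B`. Every
representation gives the same relation, and two rationals always have representations with common
`c` and `B`; this turns reasoning about rational bounds into reasoning about sums in the prestreak.

In a streak, density of the rationals and tightness show that two elements are equal as soon as,
for every `q < r`, they share the lower bound `q` or the upper bound `r`. For maps preserving
rational bounds this holds for `f a` and `g a` by cotransitivity at `a`. In an archimedean `X`,
every element lies in rational brackets `p < x < p + ε` of any width; brackets of `a` and `b` add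
(and, for positive elements, multiply) to arbitrarily narrow brackets of `a + b` (resp. `a · b`),
which `f` carries to common brackets of `f (a + b)` and `f a + f b` (resp. of the products).
-/

theorem Int.exists_eq_natCast_sub_natCast (z z' : ℤ) :
    ∃ B A A' : ℕ, z = A - B ∧ z' = A' - B :=
  ⟨z.natAbs + z'.natAbs, (z + (z.natAbs + z'.natAbs : ℕ)).toNat,
    (z' + (z.natAbs + z'.natAbs : ℕ)).toNat, by omega, by omega⟩

theorem Rat.exists_common_nat_repr (q r : ℚ) :
    ∃ c B A A' : ℕ, 0 < c ∧ q * c = A - B ∧ r * c = A' - B := by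
  obtain ⟨B, A, A', hA, hA'⟩ :=
    Int.exists_eq_natCast_sub_natCast (q.num * r.den) (r.num * q.den)
  refine ⟨q.den * r.den, B, A, A', Nat.mul_pos q.den_pos r.den_pos, ?_, ?_⟩
  · push_cast
    rw [← mul_assoc, Rat.mul_den_eq_num]
    exact_mod_cast hA
  · push_cast
    rw [mul_comm (q.den : ℚ), ← mul_assoc, Rat.mul_den_eq_num]
    exact_mod_cast hA'

theorem Rat.exists_nat_repr_of_pos {q : ℚ} (hq : 0 < q) :
    ∃ c A : ℕ, 0 < c ∧ 0 < A ∧ q * c = A := by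
  have hnum := Rat.num_pos.2 hq
  refine ⟨q.den, q.num.toNat, q.den_pos, by omega, ?_⟩
  rw [Rat.mul_den_eq_num]
  exact_mod_cast (Int.toNat_of_nonneg hnum.le).symm

theorem Rat.natCast_toNat_num_sub (q : ℚ) :
    ((q.num.toNat : ℕ) : ℚ) - ((-q.num).toNat : ℕ) = q * q.den := by
  rw [Rat.mul_den_eq_num]
  exact_mod_cast (show (q.num.toNat : ℤ) - ((-q.num).toNat : ℤ) = q.num by omega)

theorem Rat.num_den_cross {q : ℚ} {A B c : ℕ} (hq : q * c = A - B) :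
    c * q.num.toNat + q.den * B = q.den * A + c * (-q.num).toNat := by
  have h : (c : ℚ) * q.num.toNat + q.den * B = q.den * A + c * (-q.num).toNat := by
    linear_combination (c : ℚ) * Rat.natCast_toNat_num_sub q + (q.den : ℚ) * hq
  exact_mod_cast h

theorem Rat.lt_iff_of_common_repr {q r : ℚ} {c B A A' : ℕ} (hc : 0 < c) (hq : q * c = A - B)
    (hr : r * c = A' - B) : q < r ↔ A < A' := by
  rw [← mul_lt_mul_iff_of_pos_right (show (0 : ℚ) < c by exact_mod_cast hc), hq, hr,
    sub_lt_sub_iff_right, Nat.cast_lt]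

theorem Rat.le_iff_of_common_repr {q r : ℚ} {c B A A' : ℕ} (hc : 0 < c) (hq : q * c = A - B)
    (hr : r * c = A' - B) : q ≤ r ↔ A ≤ A' := by
  rw [← mul_le_mul_iff_of_pos_right (show (0 : ℚ) < c by exact_mod_cast hc), hq, hr,
    sub_le_sub_iff_right, Nat.cast_le]

namespace Prestreak

variable {X : Type*} (P : Prestreak X) {a b c d u v x y : X} {p p' q r s s' t t' ε : ℚ}

theorem lt_irrefl (a : X) : ¬ P.lt a a := fun h => P.lt_asymm a a ⟨h, h⟩

theorem not_lt_of_lt (h : P.lt a b) : ¬ P.lt b a := fun h' => P.lt_asymm a b ⟨h, h'⟩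

theorem lt_trans (h₁ : P.lt a b) (h₂ : P.lt b c) : P.lt a c :=
  (P.lt_cotrans a b c h₁).resolve_right (P.not_lt_of_lt h₂)

theorem lt_of_not_lt_of_lt (h₁ : ¬ P.lt b a) (h₂ : P.lt b c) : P.lt a c :=
  (P.lt_cotrans b c a h₂).resolve_left h₁

theorem lt_of_lt_of_not_lt (h₁ : P.lt a b) (h₂ : ¬ P.lt c b) : P.lt a c :=
  (P.lt_cotrans a b c h₁).resolve_right h₂

theorem zero_add (a : X) : P.add P.zero a = a := by
  rw [P.add_comm]
  exact P.add_zero a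

theorem add_lt_add_iff_left (a b x : X) : P.lt (P.add x a) (P.add x b) ↔ P.lt a b := by
  rw [P.add_comm x a, P.add_comm x b]
  exact P.add_lt_add_iff a b x

theorem add_lt_add (h₁ : P.lt a b) (h₂ : P.lt c d) : P.lt (P.add a c) (P.add b d) :=
  P.lt_trans ((P.add_lt_add_iff a b c).2 h₁) ((P.add_lt_add_iff_left c d b).2 h₂)

abbrev toAddCommMonoid : AddCommMonoid X where
  add := P.add
  zero := P.zero
  add_assoc := P.add_assoc
  zero_add := P.zero_add
  add_zero := P.add_zero
  add_comm := P.add_comm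
  nsmul := P.nsmul
  nsmul_zero _ := rfl
  nsmul_succ _ _ := rfl

theorem add_add_add_comm (a b c d : X) :
    P.add (P.add a b) (P.add c d) = P.add (P.add a c) (P.add b d) :=
  letI := P.toAddCommMonoid; _root_.add_add_add_comm a b c d

theorem add_right_comm (a b c : X) : P.add (P.add a b) c = P.add (P.add a c) b :=
  letI := P.toAddCommMonoid; _root_.add_right_comm a b c

theorem nsmul_add (n : ℕ) (a b : X) :
    P.nsmul n (P.add a b) = P.add (P.nsmul n a) (P.nsmul n b) :=
  letI := P.toAddCommMonoid; _root_.nsmul_add a b n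

theorem add_nsmul (m n : ℕ) (a : X) : P.nsmul (m + n) a = P.add (P.nsmul m a) (P.nsmul n a) :=
  letI := P.toAddCommMonoid; _root_.add_nsmul a m n

theorem mul_nsmul (m n : ℕ) (a : X) : P.nsmul (m * n) a = P.nsmul m (P.nsmul n a) :=
  letI := P.toAddCommMonoid; mul_nsmul' a m n

theorem nsmul_zero (n : ℕ) : P.nsmul n P.zero = P.zero :=
  letI := P.toAddCommMonoid; _root_.nsmul_zero n

theorem one_nsmul (a : X) : P.nsmul 1 a = a :=
  letI := P.toAddCommMonoid; _root_.one_nsmul a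

theorem ofNat_add (m n : ℕ) : P.ofNat (m + n) = P.add (P.ofNat m) (P.ofNat n) :=
  P.add_nsmul m n P.one

theorem nsmul_ofNat (m n : ℕ) : P.nsmul m (P.ofNat n) = P.ofNat (m * n) :=
  (P.mul_nsmul m n P.one).symm

theorem ofNat_one : P.ofNat 1 = P.one := P.one_nsmul P.one

theorem nsmul_lt_nsmul_iff {n : ℕ} (hn : 0 < n) :
    P.lt (P.nsmul n a) (P.nsmul n b) ↔ P.lt a b := by
  induction n, hn using Nat.le_induction with
  | base => rw [P.one_nsmul, P.one_nsmul]
  | succ n hn ih =>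
    refine ⟨fun h => ?_, fun h => P.add_lt_add (ih.2 h) h⟩
    rcases P.lt_cotrans _ _ (P.add (P.nsmul n a) b) h with h' | h'
    · exact (P.add_lt_add_iff_left a b _).1 h'
    · exact ih.1 ((P.add_lt_add_iff _ _ b).1 h')

theorem nsmul_pos_iff {n : ℕ} (hn : 0 < n) : P.lt P.zero (P.nsmul n a) ↔ P.lt P.zero a := by
  rw [← P.nsmul_lt_nsmul_iff hn (a := P.zero) (b := a), P.nsmul_zero]

theorem ofNat_pos {n : ℕ} (hn : 0 < n) : P.lt P.zero (P.ofNat n) :=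
  (P.nsmul_pos_iff hn).2 P.zero_lt_one

theorem ofNat_lt_ofNat {m n : ℕ} (h : m < n) : P.lt (P.ofNat m) (P.ofNat n) := by
  obtain ⟨k, rfl⟩ := Nat.exists_eq_add_of_lt h
  rw [Nat.add_assoc, P.ofNat_add]
  have := (P.add_lt_add_iff_left _ _ (P.ofNat m)).2 (P.ofNat_pos k.succ_pos)
  rwa [P.add_zero] at this

theorem ofNat_lt_ofNat_iff {m n : ℕ} : P.lt (P.ofNat m) (P.ofNat n) ↔ m < n := by
  refine ⟨fun h => ?_, P.ofNat_lt_ofNat⟩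
  rcases Nat.lt_or_ge n m with hnm | hmn
  · exact absurd (P.ofNat_lt_ofNat hnm) (P.not_lt_of_lt h)
  · rcases hmn.eq_or_lt with rfl | hmn
    · exact absurd h (P.lt_irrefl _)
    · exact hmn

theorem lt_iff_nsmul_add {k : ℕ} (hk : 0 < k) (e : X) :
    P.lt u v ↔ P.lt (P.add (P.nsmul k u) e) (P.add (P.nsmul k v) e) :=
  (P.nsmul_lt_nsmul_iff hk).symm.trans (P.add_lt_add_iff _ _ e).symm

theorem nsmul_ofNat_add (k A e : ℕ) :
    P.add (P.nsmul k (P.ofNat A)) (P.ofNat e) = P.ofNat (k * A + e) := by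
  rw [P.nsmul_ofNat, P.ofNat_add]

theorem nsmul_nsmul_add_add (k c B e : ℕ) (x : X) :
    P.add (P.nsmul k (P.add (P.nsmul c x) (P.ofNat B))) (P.ofNat e) =
      P.add (P.nsmul (k * c) x) (P.ofNat (k * B + e)) := by
  rw [P.nsmul_add, P.mul_nsmul, P.nsmul_ofNat, P.ofNat_add, P.add_assoc]

theorem ofNat_lt_nsmul_add_iff_scale {A B c k : ℕ} (hk : 0 < k) (e : ℕ) :
    P.lt (P.ofNat A) (P.add (P.nsmul c x) (P.ofNat B)) ↔
      P.lt (P.ofNat (k * A + e)) (P.add (P.nsmul (k * c) x) (P.ofNat (k * B + e))) := by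
  rw [P.lt_iff_nsmul_add hk (P.ofNat e), P.nsmul_ofNat_add, P.nsmul_nsmul_add_add]

theorem nsmul_add_lt_ofNat_iff_scale {A B c k : ℕ} (hk : 0 < k) (e : ℕ) :
    P.lt (P.add (P.nsmul c x) (P.ofNat B)) (P.ofNat A) ↔
      P.lt (P.add (P.nsmul (k * c) x) (P.ofNat (k * B + e))) (P.ofNat (k * A + e)) := by
  rw [P.lt_iff_nsmul_add hk (P.ofNat e), P.nsmul_ofNat_add, P.nsmul_nsmul_add_add]

theorem qLt_iff {A B c : ℕ} (hc : 0 < c) (hq : q * c = A - B) (x : X) :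
    P.qLt q x ↔ P.lt (P.ofNat A) (P.add (P.nsmul c x) (P.ofNat B)) := by
  rw [qLt, P.ofNat_lt_nsmul_add_iff_scale hc (q.den * B),
    P.ofNat_lt_nsmul_add_iff_scale (A := A) q.den_pos (c * (-q.num).toNat), Rat.num_den_cross hq,
    Nat.mul_comm c q.den, Nat.add_comm (c * (-q.num).toNat)]

theorem ltQ_iff {A B c : ℕ} (hc : 0 < c) (hq : q * c = A - B) (x : X) :
    P.ltQ x q ↔ P.lt (P.add (P.nsmul c x) (P.ofNat B)) (P.ofNat A) := by
  rw [ltQ, P.nsmul_add_lt_ofNat_iff_scale hc (q.den * B),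
    P.nsmul_add_lt_ofNat_iff_scale (A := A) q.den_pos (c * (-q.num).toNat), Rat.num_den_cross hq,
    Nat.mul_comm c q.den, Nat.add_comm (c * (-q.num).toNat)]

theorem qLt_of_le (hqr : q ≤ r) (h : P.qLt r x) : P.qLt q x := by
  obtain ⟨c, B, A, A', hc, hq, hr⟩ := Rat.exists_common_nat_repr q r
  rw [P.qLt_iff hc hq]
  rw [P.qLt_iff hc hr] at h
  exact P.lt_of_not_lt_of_lt
    (fun h' => (P.ofNat_lt_ofNat_iff.1 h').not_ge ((Rat.le_iff_of_common_repr hc hq hr).1 hqr)) h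

theorem ltQ_of_le (hqr : q ≤ r) (h : P.ltQ x q) : P.ltQ x r := by
  obtain ⟨c, B, A, A', hc, hq, hr⟩ := Rat.exists_common_nat_repr q r
  rw [P.ltQ_iff hc hr]
  rw [P.ltQ_iff hc hq] at h
  exact P.lt_of_lt_of_not_lt h
    (fun h' => (P.ofNat_lt_ofNat_iff.1 h').not_ge ((Rat.le_iff_of_common_repr hc hq hr).1 hqr))

theorem qLt_or_ltQ (hqr : q < r) (x : X) : P.qLt q x ∨ P.ltQ x r := by
  obtain ⟨c, B, A, A', hc, hq, hr⟩ := Rat.exists_common_nat_repr q r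
  rw [P.qLt_iff hc hq, P.ltQ_iff hc hr]
  exact P.lt_cotrans _ _ _ (P.ofNat_lt_ofNat ((Rat.lt_iff_of_common_repr hc hq hr).1 hqr))

theorem lt_of_qLt_of_ltQ (h₁ : P.qLt q x) (h₂ : P.ltQ x r) : q < r := by
  obtain ⟨c, B, A, A', hc, hq, hr⟩ := Rat.exists_common_nat_repr q r
  rw [P.qLt_iff hc hq] at h₁
  rw [P.ltQ_iff hc hr] at h₂
  exact (Rat.lt_iff_of_common_repr hc hq hr).2 (P.ofNat_lt_ofNat_iff.1 (P.lt_trans h₁ h₂))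

theorem lt_of_ltQ_of_qLt (hqr : q ≤ r) (h₁ : P.ltQ x q) (h₂ : P.qLt r y) : P.lt x y := by
  obtain ⟨c, B, A, A', hc, hq, hr⟩ := Rat.exists_common_nat_repr q r
  rw [P.ltQ_iff hc hq] at h₁
  rw [P.qLt_iff hc hr] at h₂
  have hAA' : ¬ P.lt (P.ofNat A') (P.ofNat A) := fun h =>
    (P.ofNat_lt_ofNat_iff.1 h).not_ge ((Rat.le_iff_of_common_repr hc hq hr).1 hqr)
  exact (P.lt_iff_nsmul_add hc (P.ofNat B)).2 (P.lt_trans h₁ (P.lt_of_not_lt_of_lt hAA' h₂))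

theorem qLt_ofNat_iff {n : ℕ} : P.qLt q (P.ofNat n) ↔ q < n := by
  obtain ⟨c, B, A, A', hc, hq, hn⟩ := Rat.exists_common_nat_repr q n
  have hA' : c * n + B = A' := by
    have h : ((c * n + B : ℕ) : ℚ) = A' := by push_cast; linarith
    exact_mod_cast h
  rw [P.qLt_iff hc hq, P.nsmul_ofNat_add, hA', P.ofNat_lt_ofNat_iff,
    Rat.lt_iff_of_common_repr hc hq hn]

theorem ltQ_ofNat_iff {n : ℕ} : P.ltQ (P.ofNat n) q ↔ (n : ℚ) < q := by
  obtain ⟨c, B, A', A, hc, hn, hq⟩ := Rat.exists_common_nat_repr n q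
  have hA' : c * n + B = A' := by
    have h : ((c * n + B : ℕ) : ℚ) = A' := by push_cast; linarith
    exact_mod_cast h
  rw [P.ltQ_iff hc hq, P.nsmul_ofNat_add, hA', P.ofNat_lt_ofNat_iff,
    Rat.lt_iff_of_common_repr hc hn hq]

def Between (p : ℚ) (x : X) (p' : ℚ) : Prop := P.qLt p x ∧ P.ltQ x p'

theorem exists_ofNat_bracket (hA : P.Archimedean) (w : X) :
    ∃ B k : ℕ, P.lt (P.ofNat k) (P.add w (P.ofNat B)) ∧
      P.lt (P.add w (P.ofNat B)) (P.ofNat (k + 2)) := by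
  obtain ⟨B, hB⟩ := hA P.zero P.zero w P.one P.zero_lt_one
  obtain ⟨N, hN⟩ := hA w P.zero P.zero P.one P.zero_lt_one
  rw [P.nsmul_zero, P.zero_add] at hB
  rw [P.nsmul_zero, P.add_zero, P.zero_add] at hN
  have hNB : P.lt (P.add w (P.ofNat B)) (P.ofNat (N + B)) := by
    rw [P.ofNat_add]
    exact (P.add_lt_add_iff _ _ _).2 hN
  obtain ⟨k, hk, hk₁⟩ : ∃ k, P.lt (P.ofNat k) (P.add w (P.ofNat B)) ∧
      ¬ P.lt (P.ofNat (k + 1)) (P.add w (P.ofNat B)) := by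
    -- otherwise induction would give `k < w + B` for every `k`, in particular for `N + B`
    by_contra! hstep
    exact P.not_lt_of_lt hNB (Nat.rec hB hstep (N + B))
  exact ⟨B, k, hk, P.lt_of_not_lt_of_lt hk₁ (P.ofNat_lt_ofNat (by omega))⟩

theorem exists_ltQ_qLt_of_lt (hA : P.Archimedean) (h : P.lt u v) :
    ∃ q r : ℚ, q < r ∧ P.ltQ u q ∧ P.qLt r v := by
  obtain ⟨n, hn⟩ := hA (P.ofNat 3) u P.zero v h
  rw [P.zero_add] at hn
  have hn₀ : 0 < n := Nat.pos_of_ne_zero <| by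
    rintro rfl
    exact P.not_lt_of_lt (P.ofNat_pos three_pos) (by rwa [nsmul, P.add_zero] at hn)
  have hn' : (n : ℚ) ≠ 0 := by positivity
  -- `n·u + B` lies in `(k, k + 2)`, so `n·v + B > 3 + n·u + B` exceeds `k + 3`
  obtain ⟨B, k, hk, hk₂⟩ := P.exists_ofNat_bracket hA (P.nsmul n u)
  refine ⟨(((k + 2 : ℕ) : ℚ) - B) / n, (((k + 3 : ℕ) : ℚ) - B) / n, ?_,
    (P.ltQ_iff hn₀ (div_mul_cancel₀ _ hn') u).2 hk₂,
    (P.qLt_iff hn₀ (div_mul_cancel₀ _ hn') v).2 ?_⟩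
  · rw [div_lt_div_iff_of_pos_right (by positivity)]
    push_cast
    linarith
  · have h₃ := (P.add_lt_add_iff _ _ (P.ofNat 3)).2 hk
    rw [← P.ofNat_add, P.add_right_comm, P.add_comm (P.nsmul n u)] at h₃
    exact P.lt_trans h₃ ((P.add_lt_add_iff _ _ _).2 hn)

theorem exists_between_width (hA : P.Archimedean) (x : X) (hε : 0 < ε) :
    ∃ p, P.Between p x (p + ε) := by
  obtain ⟨n, hn⟩ := exists_nat_gt (2 / ε)
  have hn₀ : 0 < n := by exact_mod_cast (div_pos two_pos hε).trans hn
  have hn' : (n : ℚ) ≠ 0 := by positivity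
  have h2n : 2 / (n : ℚ) ≤ ε := by
    rw [div_le_iff₀ (by positivity)]
    rw [div_lt_iff₀ hε] at hn
    linarith
  obtain ⟨B, k, hk, hk₂⟩ := P.exists_ofNat_bracket hA (P.nsmul n x)
  refine ⟨((k : ℚ) - B) / n, (P.qLt_iff hn₀ (div_mul_cancel₀ _ hn') x).2 hk,
    P.ltQ_of_le ?_ ((P.ltQ_iff hn₀ (div_mul_cancel₀ (((k + 2 : ℕ) : ℚ) - B) hn') x).2 hk₂)⟩
  calc (((k + 2 : ℕ) : ℚ) - B) / n = ((k : ℚ) - B) / n + 2 / n := by push_cast; ring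
    _ ≤ _ := by linarith

theorem exists_pos_between_width (hA : P.Archimedean) (ha : P.lt P.zero a) (hε : 0 < ε) :
    ∃ p, 0 < p ∧ P.Between p a (p + ε) := by
  obtain ⟨q, r, hqr, hq, hr⟩ := P.exists_ltQ_qLt_of_lt hA ha
  have hq₀ : (0 : ℚ) < q := by exact_mod_cast (P.ltQ_ofNat_iff (n := 0)).1 hq
  obtain ⟨p, hp, hp'⟩ := P.exists_between_width hA a hε
  refine ⟨max p r, lt_max_of_lt_right (hq₀.trans hqr), ?_,
    P.ltQ_of_le (by gcongr; exact le_max_left p r) hp'⟩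
  rcases max_choice p r with h | h <;> rw [h] <;> assumption

theorem qLt_add (h₁ : P.qLt s a) (h₂ : P.qLt t b) : P.qLt (s + t) (P.add a b) := by
  obtain ⟨c, B, A, A', hc, hs, ht⟩ := Rat.exists_common_nat_repr s t
  rw [P.qLt_iff hc hs] at h₁
  rw [P.qLt_iff hc ht] at h₂
  rw [P.qLt_iff (A := A + A') (B := B + B) hc (by push_cast; linear_combination hs + ht),
    P.ofNat_add A, P.nsmul_add, P.ofNat_add B, P.add_add_add_comm (P.nsmul c a)]
  exact P.add_lt_add h₁ h₂

theorem ltQ_add (h₁ : P.ltQ a s) (h₂ : P.ltQ b t) : P.ltQ (P.add a b) (s + t) := by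
  obtain ⟨c, B, A, A', hc, hs, ht⟩ := Rat.exists_common_nat_repr s t
  rw [P.ltQ_iff hc hs] at h₁
  rw [P.ltQ_iff hc ht] at h₂
  rw [P.ltQ_iff (A := A + A') (B := B + B) hc (by push_cast; linear_combination hs + ht),
    P.ofNat_add A, P.nsmul_add, P.ofNat_add B, P.add_add_add_comm (P.nsmul c a)]
  exact P.add_lt_add h₁ h₂

theorem mul_lt_mul_of_lt_of_lt (ha : P.lt P.zero a) (hc : P.lt P.zero c) (hab : P.lt a b)
    (hcd : P.lt c d) : P.lt (P.mul a c) (P.mul b d) := by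
  have hb := P.lt_trans ha hab
  have hd := P.lt_trans hc hcd
  refine P.lt_trans ((P.mul_lt_mul_iff a b c ha hb hc).2 hab) ?_
  rw [P.mul_comm b c hb hc, P.mul_comm b d hb hd]
  exact (P.mul_lt_mul_iff c d b hc hd hb).2 hcd

theorem nsmul_mul {n : ℕ} (hn : 0 < n) (ha : P.lt P.zero a) (hb : P.lt P.zero b) :
    P.mul (P.nsmul n a) b = P.nsmul n (P.mul a b) := by
  induction n, hn using Nat.le_induction with
  | base => rw [P.one_nsmul, P.one_nsmul]
  | succ n hn ih =>
    change P.mul (P.add (P.nsmul n a) a) b = P.add (P.nsmul n (P.mul a b)) (P.mul a b)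
    rw [P.mul_add _ _ _ ((P.nsmul_pos_iff hn).2 ha) ha hb, ih]

theorem nsmul_mul_nsmul {m n : ℕ} (hm : 0 < m) (hn : 0 < n) (ha : P.lt P.zero a)
    (hb : P.lt P.zero b) : P.mul (P.nsmul m a) (P.nsmul n b) = P.nsmul (m * n) (P.mul a b) := by
  have hnb := (P.nsmul_pos_iff hn).2 hb
  rw [P.nsmul_mul hm ha hnb, P.mul_comm a _ ha hnb, P.nsmul_mul hn hb ha, P.mul_comm b a hb ha,
    P.mul_nsmul]

theorem ofNat_mul_ofNat {m n : ℕ} (hm : 0 < m) (hn : 0 < n) :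
    P.mul (P.ofNat m) (P.ofNat n) = P.ofNat (m * n) := by
  rw [ofNat, ofNat, P.nsmul_mul_nsmul hm hn P.zero_lt_one P.zero_lt_one,
    P.mul_one _ P.zero_lt_one, ofNat]

theorem qLt_iff_of_pos {A c : ℕ} (hc : 0 < c) (hq : q * c = A) (x : X) :
    P.qLt q x ↔ P.lt (P.ofNat A) (P.nsmul c x) := by
  rw [P.qLt_iff (A := A) (B := 0) hc (by rw [hq, Nat.cast_zero, sub_zero]),
    show P.ofNat 0 = P.zero from rfl, P.add_zero]

theorem ltQ_iff_of_pos {A c : ℕ} (hc : 0 < c) (hq : q * c = A) (x : X) :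
    P.ltQ x q ↔ P.lt (P.nsmul c x) (P.ofNat A) := by
  rw [P.ltQ_iff (A := A) (B := 0) hc (by rw [hq, Nat.cast_zero, sub_zero]),
    show P.ofNat 0 = P.zero from rfl, P.add_zero]

theorem zero_lt_of_qLt (hs : 0 < s) (h : P.qLt s a) : P.lt P.zero a := by
  obtain ⟨c, A, hc, hA, hsc⟩ := Rat.exists_nat_repr_of_pos hs
  rw [P.qLt_iff_of_pos hc hsc] at h
  exact (P.nsmul_pos_iff hc).1 (P.lt_trans (P.ofNat_pos hA) h)

theorem qLt_mul (hs : 0 < s) (ht : 0 < t) (h₁ : P.qLt s a) (h₂ : P.qLt t b) :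
    P.qLt (s * t) (P.mul a b) := by
  have ha := P.zero_lt_of_qLt hs h₁
  have hb := P.zero_lt_of_qLt ht h₂
  obtain ⟨c, A, hc, hA, hsc⟩ := Rat.exists_nat_repr_of_pos hs
  obtain ⟨c', A', hc', hA', htc⟩ := Rat.exists_nat_repr_of_pos ht
  rw [P.qLt_iff_of_pos hc hsc] at h₁
  rw [P.qLt_iff_of_pos hc' htc] at h₂
  rw [P.qLt_iff_of_pos (A := A * A') (Nat.mul_pos hc hc')
      (by push_cast; linear_combination (t * c') * hsc + (A : ℚ) * htc),
    ← P.ofNat_mul_ofNat hA hA', ← P.nsmul_mul_nsmul hc hc' ha hb]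
  exact P.mul_lt_mul_of_lt_of_lt (P.ofNat_pos hA) (P.ofNat_pos hA') h₁ h₂

theorem ltQ_mul (ha : P.lt P.zero a) (hb : P.lt P.zero b) (hs : 0 < s) (ht : 0 < t)
    (h₁ : P.ltQ a s) (h₂ : P.ltQ b t) : P.ltQ (P.mul a b) (s * t) := by
  obtain ⟨c, A, hc, hA, hsc⟩ := Rat.exists_nat_repr_of_pos hs
  obtain ⟨c', A', hc', hA', htc⟩ := Rat.exists_nat_repr_of_pos ht
  rw [P.ltQ_iff_of_pos hc hsc] at h₁
  rw [P.ltQ_iff_of_pos hc' htc] at h₂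
  rw [P.ltQ_iff_of_pos (A := A * A') (Nat.mul_pos hc hc')
      (by push_cast; linear_combination (t * c') * hsc + (A : ℚ) * htc),
    ← P.ofNat_mul_ofNat hA hA', ← P.nsmul_mul_nsmul hc hc' ha hb]
  exact P.mul_lt_mul_of_lt_of_lt ((P.nsmul_pos_iff hc).2 ha) ((P.nsmul_pos_iff hc').2 hb) h₁ h₂

variable {P}

theorem Between.lt (h : P.Between p x p') : p < p' := P.lt_of_qLt_of_ltQ h.1 h.2

theorem Between.add (h₁ : P.Between s a s') (h₂ : P.Between t b t') :
    P.Between (s + t) (P.add a b) (s' + t') :=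
  ⟨P.qLt_add h₁.1 h₂.1, P.ltQ_add h₁.2 h₂.2⟩

theorem Between.mul (hs : 0 < s) (ht : 0 < t) (h₁ : P.Between s a s') (h₂ : P.Between t b t') :
    P.Between (s * t) (P.mul a b) (s' * t') :=
  ⟨P.qLt_mul hs ht h₁.1 h₂.1, P.ltQ_mul (P.zero_lt_of_qLt hs h₁.1) (P.zero_lt_of_qLt ht h₂.1)
    (hs.trans h₁.lt) (ht.trans h₂.lt) h₁.2 h₂.2⟩

variable (P)

theorem exists_between_mul (hA : P.Archimedean) (ha : P.lt P.zero a) (hb : P.lt P.zero b)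
    (hε : 0 < ε) : ∃ s s' t t', 0 < s ∧ 0 < t ∧ P.Between s a s' ∧ P.Between t b t' ∧
      s' * t' ≤ s * t + ε := by
  obtain ⟨Ma, hMa₀, -, hMa⟩ := P.exists_pos_between_width hA ha one_pos
  obtain ⟨Mb, hMb₀, -, hMb⟩ := P.exists_pos_between_width hA hb one_pos
  set M := Ma + Mb + 3
  set δ := min 1 (ε / M)
  have hM : 0 < M := by positivity
  have hδ : 0 < δ := lt_min one_pos (div_pos hε hM)
  have hδ₁ : δ ≤ 1 := min_le_left _ _
  have hδM : δ * M ≤ ε := (le_div_iff₀ hM).1 (min_le_right _ _)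
  obtain ⟨s, hs, hsa⟩ := P.exists_pos_between_width hA ha hδ
  obtain ⟨t, ht, htb⟩ := P.exists_pos_between_width hA hb hδ
  have hsM : s < Ma + 1 := P.lt_of_qLt_of_ltQ hsa.1 hMa
  have htM : t < Mb + 1 := P.lt_of_qLt_of_ltQ htb.1 hMb
  refine ⟨s, s + δ, t, t + δ, hs, ht, hsa, htb, ?_⟩
  -- `(s + δ) (t + δ) - s t = δ (s + t + δ)` and `s + t + δ ≤ M`
  nlinarith [mul_le_mul_of_nonneg_left (show s + t + δ ≤ M by linarith) hδ.le]

theorem not_lt_of_located (hA : P.Archimedean)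
    (h : ∀ q r : ℚ, q < r → (P.qLt q x ∧ P.qLt q y) ∨ (P.ltQ x r ∧ P.ltQ y r)) :
    ¬ P.lt x y := fun hxy => by
  obtain ⟨q, r, hqr, hx, hy⟩ := P.exists_ltQ_qLt_of_lt hA hxy
  rcases h q r hqr with ⟨hqx, -⟩ | ⟨-, hyr⟩
  · exact (P.lt_of_qLt_of_ltQ hqx hx).false
  · exact (P.lt_of_qLt_of_ltQ hy hyr).false

theorem eq_of_located (hA : P.Archimedean) (hT : P.Tight)
    (h : ∀ q r : ℚ, q < r → (P.qLt q x ∧ P.qLt q y) ∨ (P.ltQ x r ∧ P.ltQ y r)) : x = y :=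
  hT x y (P.not_lt_of_located hA h)
    (P.not_lt_of_located hA fun q r hqr => (h q r hqr).imp And.symm And.symm)

theorem eq_of_forall_between (hA : P.Archimedean) (hT : P.Tight)
    (h : ∀ ε : ℚ, 0 < ε → ∃ p p', p' ≤ p + ε ∧ P.Between p x p' ∧ P.Between p y p') :
    x = y := by
  refine P.eq_of_located hA hT fun q r hqr => ?_
  obtain ⟨p, p', hpp', hx, hy⟩ := h (r - q) (sub_pos.2 hqr)
  rcases le_or_gt q p with hqp | hpq
  · exact Or.inl ⟨P.qLt_of_le hqp hx.1, P.qLt_of_le hqp hy.1⟩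
  · have hp'r : p' ≤ r := by linarith
    exact Or.inr ⟨P.ltQ_of_le hp'r hx.2, P.ltQ_of_le hp'r hy.2⟩

def PreservesRatComparisons {Y : Type*} (Q : Prestreak Y) (f : X → Y) : Prop :=
  (∀ (q : ℚ) (a : X), P.qLt q a → Q.qLt q (f a)) ∧ ∀ (q : ℚ) (a : X), P.ltQ a q → Q.ltQ (f a) q

namespace PreservesRatComparisons

variable {P} {Y : Type*} {Q : Prestreak Y} {f g : X → Y}

theorem between (hf : P.PreservesRatComparisons Q f) (h : P.Between p a p') :
    Q.Between p (f a) p' :=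
  ⟨hf.1 p a h.1, hf.2 p' a h.2⟩

theorem eq (hf : P.PreservesRatComparisons Q f) (hQA : Q.Archimedean) (hQT : Q.Tight)
    (hg : P.PreservesRatComparisons Q g) : f = g :=
  funext fun a => Q.eq_of_located hQA hQT fun q r hqr =>
    (P.qLt_or_ltQ hqr a).imp (fun h => ⟨hf.1 q a h, hg.1 q a h⟩) (fun h => ⟨hf.2 r a h, hg.2 r a h⟩)

theorem map_lt (hf : P.PreservesRatComparisons Q f) (hPA : P.Archimedean) (h : P.lt a b) :
    Q.lt (f a) (f b) := by
  obtain ⟨q, r, hqr, ha, hb⟩ := P.exists_ltQ_qLt_of_lt hPA h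
  exact Q.lt_of_ltQ_of_qLt hqr.le (hf.2 q a ha) (hf.1 r b hb)

theorem map_ofNat (hf : P.PreservesRatComparisons Q f) (hQA : Q.Archimedean) (hQT : Q.Tight)
    (n : ℕ) : f (P.ofNat n) = Q.ofNat n :=
  Q.eq_of_located hQA hQT fun q r hqr => by
    rcases lt_or_ge q n with hq | hq
    · exact Or.inl ⟨hf.1 q _ (P.qLt_ofNat_iff.2 hq), Q.qLt_ofNat_iff.2 hq⟩
    · have hr : (n : ℚ) < r := hq.trans_lt hqr
      exact Or.inr ⟨hf.2 r _ (P.ltQ_ofNat_iff.2 hr), Q.ltQ_ofNat_iff.2 hr⟩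

theorem map_add (hf : P.PreservesRatComparisons Q f) (hQA : Q.Archimedean) (hQT : Q.Tight)
    (hPA : P.Archimedean) (a b : X) :
    f (P.add a b) = Q.add (f a) (f b) :=
  Q.eq_of_forall_between hQA hQT fun ε hε => by
    obtain ⟨s, hs⟩ := P.exists_between_width hPA a (half_pos hε)
    obtain ⟨t, ht⟩ := P.exists_between_width hPA b (half_pos hε)
    exact ⟨s + t, s + ε / 2 + (t + ε / 2), by linarith, hf.between (hs.add ht),
      (hf.between hs).add (hf.between ht)⟩

theorem map_mul (hf : P.PreservesRatComparisons Q f) (hQA : Q.Archimedean) (hQT : Q.Tight)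
    (hPA : P.Archimedean) (ha : P.lt P.zero a) (hb : P.lt P.zero b) :
    f (P.mul a b) = Q.mul (f a) (f b) :=
  Q.eq_of_forall_between hQA hQT fun ε hε => by
    obtain ⟨s, s', t, t', hs, ht, hsa, htb, hst⟩ := P.exists_between_mul hPA ha hb hε
    exact ⟨s * t, s' * t', hst, hf.between (hsa.mul hs ht htb),
      (hf.between hsa).mul hs ht (hf.between htb)⟩

theorem isHom (hf : P.PreservesRatComparisons Q f) (hQA : Q.Archimedean) (hQT : Q.Tight)
    (hPA : P.Archimedean) : P.IsHom Q f :=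
  ⟨fun _ _ => hf.map_lt hPA, hf.map_add hQA hQT hPA, hf.map_ofNat hQA hQT 0,
    by rw [← P.ofNat_one, ← Q.ofNat_one]; exact hf.map_ofNat hQA hQT 1,
    fun _ _ => hf.map_mul hQA hQT hPA⟩

end PreservesRatComparisons

end Prestreak

/-- (1) There is at most one map from a prestreak to a streak preserving
comparison with rationals on both sides; (2) if the domain is archimedean,
such a map is automatically a prestreak morphism. -/
theorem preservation_of_rationals_implies_morphism {X Y : Type*}
    (P : Prestreak X) (Q : Prestreak Y) (hQA : Q.Archimedean) (hQT : Q.Tight) :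
    (∀ f g : X → Y,
      (∀ (q : ℚ) (a : X), P.qLt q a → Q.qLt q (f a)) →
      (∀ (q : ℚ) (a : X), P.ltQ a q → Q.ltQ (f a) q) →
      (∀ (q : ℚ) (a : X), P.qLt q a → Q.qLt q (g a)) →
      (∀ (q : ℚ) (a : X), P.ltQ a q → Q.ltQ (g a) q) →
      f = g) ∧
    (P.Archimedean → ∀ f : X → Y,
      (∀ (q : ℚ) (a : X), P.qLt q a → Q.qLt q (f a)) →
      (∀ (q : ℚ) (a : X), P.ltQ a q → Q.ltQ (f a) q) →
      P.IsHom Q f) :=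
  ⟨fun _ _ hf₁ hf₂ hg₁ hg₂ =>
      Prestreak.PreservesRatComparisons.eq (P := P) ⟨hf₁, hf₂⟩ hQA hQT ⟨hg₁, hg₂⟩,
    fun hPA _ hf₁ hf₂ =>
      Prestreak.PreservesRatComparisons.isHom (P := P) ⟨hf₁, hf₂⟩ hQA hQT hPA⟩
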